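/- arXiv:2506.01688 — 5 statements merged into one kernel-verified Lean document; each statement's English description precedes it below -/
import Mathlib

section
/- Let R be a ring, r ≥ 1, and N₁, …, N_r pairwise non-isomorphic simple R-modules. Set N := N₁ ⊕ ⋯ ⊕ N_r and let π_i : N → N_i denote the natural projections. If M ⊆ N is an R-submodule such that π_i(M) ≠ 0 for every 1 ≤ i ≤ r, then M = N. -/
/-- **Goursat-type lemma for modules.**
Let `R` be a ring, `r ≥ 1`, and `N₁, …, N_r` pairwise non-isomorphic simple `R`-modules.
Set `N := N₁ ⊕ ⋯ ⊕ N_r` (realized as the product `∀ i, N i`) and let `π_i : N → N_i`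
denote the natural projections.  If `M ⊆ N` is an `R`-submodule such that `π_i(M) ≠ 0`
for every `i`, then `M = N`. -/
theorem goursat_submodule_eq_top
    {R : Type*} [Ring R] {r : ℕ} (hr : 1 ≤ r)
    (N : Fin r → Type*) [∀ i, AddCommGroup (N i)] [∀ i, Module R (N i)]
    (hsimple : ∀ i, IsSimpleModule R (N i))
    (hnoniso : ∀ i j, i ≠ j → IsEmpty (N i ≃ₗ[R] N j))
    (M : Submodule R (∀ i, N i))
    (hM : ∀ i, M.map (LinearMap.proj i : (∀ i, N i) →ₗ[R] N i) ≠ ⊥) :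
    M = ⊤ := by
  classical
  haveI := hsimple
  -- the coordinate axes
  set L : Fin r → Submodule R (∀ i, N i) :=
    fun i => LinearMap.range (LinearMap.single R N i) with hLdef
  have hLsimple : ∀ i, IsSimpleModule R (L i) := fun i =>
    IsSimpleModule.congr (LinearEquiv.ofInjective (LinearMap.single R N i)
      (Pi.single_injective (M := N) i)).symm
  have hLatom : ∀ i, IsAtom (L i) := fun i =>
    isSimpleModule_iff_isAtom.mp (hLsimple i)
  have hLtop : ⨆ i, L i = ⊤ := LinearMap.iSup_range_single R N
  have hLker : ∀ i j, i ≠ j → L i ≤ LinearMap.ker (LinearMap.proj j) := by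
    rintro i j hij x ⟨y, rfl⟩
    simp only [LinearMap.mem_ker, LinearMap.single_apply, LinearMap.proj_apply]
    exact Pi.single_eq_of_ne (Ne.symm hij) y
  haveI : IsSemisimpleModule R (∀ i, N i) := by
    refine isSemisimpleModule_of_isSemisimpleModule_submodule' (p := L) (fun i => ?_) hLtop
    haveI := hLsimple i
    infer_instance
  -- auxiliary: if the projection of an atom `a` to the `j`-th coordinate is nonzero,
  -- then this projection is an isomorphism `a ≃ N j`.
  have equiv_of_ne_bot : ∀ (a : Submodule R (∀ i, N i)), IsAtom a → ∀ j,
      a.map (LinearMap.proj j : (∀ i, N i) →ₗ[R] N j) ≠ ⊥ → Nonempty (a ≃ₗ[R] N j) := by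
    intro a ha j hj
    set f : a →ₗ[R] N j := (LinearMap.proj j).comp a.subtype with hf
    have hinf : a ⊓ LinearMap.ker (LinearMap.proj j : (∀ i, N i) →ₗ[R] N j) = ⊥ := by
      rcases ha.le_iff.mp (inf_le_left :
          a ⊓ LinearMap.ker (LinearMap.proj j : (∀ i, N i) →ₗ[R] N j) ≤ a) with h | h
      · exact h
      · exfalso
        have hle : a ≤ LinearMap.ker (LinearMap.proj j : (∀ i, N i) →ₗ[R] N j) :=
          le_of_eq_of_le h.symm inf_le_right
        exact hj (LinearMap.le_ker_iff_map.mp hle)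
    have hker : LinearMap.ker f = ⊥ := by
      rw [eq_bot_iff]
      rintro y hy
      have : (y : ∀ i, N i) ∈ a ⊓
          LinearMap.ker (LinearMap.proj j : (∀ i, N i) →ₗ[R] N j) := ⟨y.2, hy⟩
      rw [hinf] at this
      exact Submodule.mem_bot _ |>.mpr (Subtype.ext (Submodule.mem_bot _ |>.mp this))
    have hrange : LinearMap.range f = ⊤ := by
      have heq : a.map (LinearMap.proj j : (∀ i, N i) →ₗ[R] N j) = LinearMap.range f := by
        rw [hf, LinearMap.range_comp, Submodule.range_subtype]
      rcases eq_bot_or_eq_top (a.map (LinearMap.proj j : (∀ i, N i) →ₗ[R] N j)) with h | h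
      · exact absurd h hj
      · rw [← heq, h]
    exact ⟨LinearEquiv.ofBijective f
      ⟨LinearMap.ker_eq_bot.mp hker, LinearMap.range_eq_top.mp hrange⟩⟩
  -- every atom is a coordinate axis
  have key : ∀ a : Submodule R (∀ i, N i), IsAtom a → ∃ i, a = L i := by
    intro a ha
    obtain ⟨x, hxa, hx0⟩ := Submodule.exists_mem_ne_zero_of_ne_bot ha.1
    obtain ⟨i, hxi⟩ : ∃ i, x i ≠ 0 := by
      by_contra h
      push_neg at h
      exact hx0 (funext h)
    have hi : a.map (LinearMap.proj i : (∀ i', N i') →ₗ[R] N i) ≠ ⊥ := by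
      intro h
      exact hxi (Submodule.mem_bot _ |>.mp (h ▸ Submodule.mem_map_of_mem hxa))
    obtain ⟨ei⟩ := equiv_of_ne_bot a ha i hi
    have hzero : ∀ j, j ≠ i → a.map (LinearMap.proj j : (∀ i', N i') →ₗ[R] N j) = ⊥ := by
      intro j hji
      by_contra hj
      obtain ⟨ej⟩ := equiv_of_ne_bot a ha j hj
      exact (hnoniso i j (Ne.symm hji)).false (ei.symm.trans ej)
    have hale : a ≤ L i := by
      intro y hy
      refine ⟨y i, ?_⟩
      have : ∀ j, (LinearMap.single R N i) (y i) j = y j := by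
        intro j
        rcases eq_or_ne j i with rfl | hji
        · simp [LinearMap.single_apply]
        · have hyj : y j = 0 := by
            have : y j ∈ a.map (LinearMap.proj j : (∀ i', N i') →ₗ[R] N j) :=
              Submodule.mem_map_of_mem hy
            rw [hzero j hji] at this
            exact Submodule.mem_bot _ |>.mp this
          simp [LinearMap.single_apply, Pi.single_eq_of_ne hji, hyj]
      exact funext this
    rcases (hLatom i).le_iff.mp hale with h | h
    · exact absurd h ha.1
    · exact ⟨i, h⟩
  -- each coordinate axis is contained in `M`
  have hLM : ∀ i, L i ≤ M := by
    intro i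
    by_contra hnot
    have hM_le : M ≤ LinearMap.ker (LinearMap.proj i : (∀ i', N i') →ₗ[R] N i) := by
      conv_lhs => rw [← IsSemisimpleModule.sSup_simples_le M]
      refine sSup_le ?_
      rintro m ⟨hm, hmM⟩
      obtain ⟨j, rfl⟩ := key m (isSimpleModule_iff_isAtom.mp hm)
      rcases eq_or_ne j i with rfl | hji
      · exact absurd hmM hnot
      · exact hLker j i hji
    exact hM i (LinearMap.le_ker_iff_map.mp hM_le)
  exact top_le_iff.mp (hLtop ▸ iSup_le hLM)
end

section
/- Let p be a prime, ε ∈ {1, −1} a real sign, and s > 0 a real number. Let μ be the Haar measure on the compact additive group ℤ_p of p-adic integers, normalized so that μ(ℤ_p) = 1. Define f : ℤ_p → ℝ by f(0) = 0 and f(a) = ε^{v(a)} · ‖a‖^s for a ≠ 0, where v(a) is the p-adic valuation of a and ‖a‖ = p^{−v(a)} its p-adic norm. Then f is integrable and ∫_{ℤ_p} f dμ = (1 − p^{−1}) / (1 − ε·p^{−(s+1)}). -/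
open MeasureTheory
open scoped ENNReal

section Aux

variable (p : ℕ) [Fact p.Prime]

/-- The closed ball of radius `p^{-n}` in `ℤ_[p]`. -/
def padicBall (n : ℕ) : Set ℤ_[p] := {a | ‖a‖ ≤ (p : ℝ) ^ (-(n : ℤ))}

lemma padicBall_closed (n : ℕ) : IsClosed (padicBall p n) :=
  isClosed_le continuous_norm continuous_const

lemma mem_padicBall_iff_toZModPow (n : ℕ) (a : ℤ_[p]) :
    a ∈ padicBall p n ↔ PadicInt.toZModPow n a = 0 := by
  rw [padicBall, Set.mem_setOf_eq, PadicInt.norm_le_pow_iff_mem_span_pow,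
    ← PadicInt.ker_toZModPow, RingHom.mem_ker]

lemma zero_mem_padicBall (n : ℕ) : (0 : ℤ_[p]) ∈ padicBall p n := by
  rw [mem_padicBall_iff_toZModPow]; simp

lemma padicBall_succ_subset (n : ℕ) : padicBall p (n + 1) ⊆ padicBall p n := by
  intro a ha
  simp only [padicBall, Set.mem_setOf_eq] at ha ⊢
  refine le_trans ha ?_
  have h1 : (1 : ℝ) ≤ p := by exact_mod_cast (Fact.out : p.Prime).one_lt.le
  exact zpow_le_zpow_right₀ h1 (by push_cast; omega)

lemma mem_padicBall_iff_le_valuation (n : ℕ) (a : ℤ_[p]) (ha : a ≠ 0) :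
    a ∈ padicBall p n ↔ (n : ℤ) ≤ a.valuation :=
  (PadicInt.norm_le_pow_iff_le_valuation a ha n).trans Nat.cast_le.symm

lemma padicBall_volume [MeasurableSpace ℤ_[p]] [BorelSpace ℤ_[p]]
    (μ : Measure ℤ_[p]) [μ.IsAddHaarMeasure] (hμ : μ Set.univ = 1) (n : ℕ) :
    μ (padicBall p n) = ((p : ℝ≥0∞) ^ n)⁻¹ := by
  haveI : NeZero (p ^ n) := ⟨pow_ne_zero n (Fact.out : p.Prime).ne_zero⟩
  set T : ZMod (p ^ n) → Set ℤ_[p] := fun x => (PadicInt.toZModPow n) ⁻¹' {x} with hT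
  have hTcoset : ∀ x : ZMod (p ^ n), ∃ c : ℤ_[p],
      T x = (fun a => c + a) ⁻¹' (padicBall p n) := by
    intro x
    obtain ⟨c, hc⟩ := ZMod.ringHom_surjective (PadicInt.toZModPow (p := p) n) x
    refine ⟨-c, ?_⟩
    ext a
    simp only [hT, Set.mem_preimage, Set.mem_singleton_iff,
      mem_padicBall_iff_toZModPow, map_add, map_neg, hc, neg_add_eq_zero, eq_comm]
    constructor
    · rintro rfl; simp
    · intro h; exact neg_add_eq_zero.mp h.symm
  have hTvol : ∀ x, μ (T x) = μ (padicBall p n) := by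
    intro x
    obtain ⟨c, hc⟩ := hTcoset x
    rw [hc, measure_preimage_add]
  have hTmeas : ∀ x, MeasurableSet (T x) := by
    intro x
    obtain ⟨c, hc⟩ := hTcoset x
    rw [hc]
    exact (measurable_const_add c) (padicBall_closed p n).measurableSet
  have hcover : (Set.univ : Set ℤ_[p]) = ⋃ x, T x := by
    ext a
    simp only [Set.mem_univ, Set.mem_iUnion, true_iff]
    exact ⟨PadicInt.toZModPow n a, rfl⟩
  have hdisj : Pairwise (Function.onFun Disjoint T) := by
    intro x y hxy
    rw [Function.onFun, Set.disjoint_left]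
    rintro a hx hy
    exact hxy (hx.symm.trans hy)
  have key : (↑(p ^ n) : ℝ≥0∞) * μ (padicBall p n) = 1 := by
    calc (↑(p ^ n) : ℝ≥0∞) * μ (padicBall p n)
        = ∑' x : ZMod (p ^ n), μ (T x) := by
          rw [tsum_fintype]
          simp only [hTvol]
          rw [Finset.sum_const, nsmul_eq_mul, Finset.card_univ, ZMod.card]
      _ = μ (⋃ x, T x) := (measure_iUnion hdisj hTmeas).symm
      _ = 1 := by rw [← hcover, hμ]
  have hne : ((p : ℝ≥0∞) ^ n) ≠ 0 :=
    pow_ne_zero n (by exact_mod_cast (Fact.out : p.Prime).ne_zero)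
  have hfin : ((p : ℝ≥0∞) ^ n) ≠ ⊤ := by
    exact ENNReal.pow_ne_top (by simp)
  have : ((p : ℝ≥0∞) ^ n)⁻¹ * (((p : ℝ≥0∞) ^ n) * μ (padicBall p n))
      = ((p : ℝ≥0∞) ^ n)⁻¹ * 1 := by
    rw [show ((p : ℝ≥0∞) ^ n) = (↑(p ^ n) : ℝ≥0∞) by push_cast; ring, key]
  rwa [← mul_assoc, ENNReal.inv_mul_cancel hne hfin, one_mul, mul_one] at this

end Aux

/-- **The local integral of Proposition 4.1.**  Let `p` be a prime, `ε ∈ {1, −1}` a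
real sign and `s > 0` real.  Let `μ` be the Haar measure on the compact additive
group `ℤ_p`, normalized so that `μ(ℤ_p) = 1`.  Define `f : ℤ_p → ℝ` by `f(0) = 0`
and `f(a) = ε^(v(a))·‖a‖^s` for `a ≠ 0`, where `v(a)` is the `p`-adic valuation and
`‖a‖ = p^(−v(a))` the `p`-adic norm.  Then `f` is integrable and
`∫ f dμ = (1 − p⁻¹)/(1 − ε·p^(−(s+1)))`. -/
theorem padic_unramified_character_integral
    (p : ℕ) [Fact p.Prime] (ε : ℝ) (hε : ε = 1 ∨ ε = -1) (s : ℝ) (hs : 0 < s)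
    [MeasurableSpace ℤ_[p]] [BorelSpace ℤ_[p]]
    (μ : Measure ℤ_[p]) [μ.IsAddHaarMeasure] (hμ : μ Set.univ = 1)
    (f : ℤ_[p] → ℝ) (hf0 : f 0 = 0)
    (hf : ∀ a : ℤ_[p], a ≠ 0 → f a = ε ^ a.valuation * ‖a‖ ^ s) :
    Integrable f μ ∧
      ∫ a, f a ∂μ = (1 - (p : ℝ)⁻¹) / (1 - ε * (p : ℝ) ^ (-(s + 1))) := by
  have hp1 : (1 : ℝ) < p := by exact_mod_cast (Fact.out : p.Prime).one_lt
  have hp0 : (0 : ℝ) < p := lt_trans one_pos hp1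
  have hεabs : |ε| = 1 := by rcases hε with h | h <;> simp [h]
  have hεne : ε ≠ 0 := by rcases hε with h | h <;> simp [h]
  haveI : IsFiniteMeasure μ := ⟨by rw [hμ]; exact ENNReal.one_lt_top⟩
  -- the shells
  set S : ℕ → Set ℤ_[p] := fun n => padicBall p n \ padicBall p (n + 1) with hS
  have hSmeas : ∀ n, MeasurableSet (S n) :=
    fun n => (padicBall_closed p n).measurableSet.diff
      (padicBall_closed p (n + 1)).measurableSet
  have hSmem : ∀ (n : ℕ) (a : ℤ_[p]), a ∈ S n ↔ a ≠ 0 ∧ a.valuation = n := by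
    intro n a
    by_cases ha : a = 0
    · subst ha
      simp only [hS, Set.mem_diff, ne_eq, not_true_eq_false, false_and, iff_false]
      intro h
      exact h.2 (zero_mem_padicBall p (n + 1))
    · simp only [hS, Set.mem_diff, mem_padicBall_iff_le_valuation p _ _ ha, ha,
        ne_eq, not_false_eq_true, true_and]
      push_cast
      omega
  have hSvol : ∀ n, μ (S n) = ((p : ℝ≥0∞) ^ n)⁻¹ - ((p : ℝ≥0∞) ^ (n + 1))⁻¹ := by
    intro n
    rw [hS, measure_diff (padicBall_succ_subset p n)
      (padicBall_closed p (n + 1)).measurableSet.nullMeasurableSet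
      (measure_ne_top μ _), padicBall_volume p μ hμ, padicBall_volume p μ hμ]
  -- the shell values
  set c : ℕ → ℝ := fun n => ε ^ n * ((p : ℝ) ^ (-(n : ℤ))) ^ s with hc
  set g : ℕ → ℤ_[p] → ℝ := fun n => (S n).indicator (fun _ => c n) with hg
  have hgmeas : ∀ n, Measurable (g n) :=
    fun n => measurable_const.indicator (hSmeas n)
  have hval : ∀ (n : ℕ) (a : ℤ_[p]), a ∈ S n → f a = c n := by
    intro n a ha
    obtain ⟨ha0, hav⟩ := (hSmem n a).1 ha
    rw [hf a ha0, PadicInt.norm_eq_zpow_neg_valuation ha0, hav, hc]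
  have hsum : ∀ a : ℤ_[p], HasSum (fun n => g n a) (f a) := by
    intro a
    by_cases ha : a = 0
    · subst ha
      have hz : (fun n => g n (0 : ℤ_[p])) = fun _ => (0 : ℝ) := by
        funext n
        rw [hg]
        exact Set.indicator_of_notMem (fun h => ((hSmem n 0).1 h).1 rfl) _
      rw [hz, hf0]
      exact hasSum_zero
    · set n₀ : ℕ := a.valuation with hn₀
      have hv : a.valuation = n₀ := rfl
      have hmem : a ∈ S n₀ := (hSmem n₀ a).2 ⟨ha, hv⟩
      have h1 : ∀ n, n ≠ n₀ → g n a = 0 := by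
        intro n hn
        rw [hg]
        refine Set.indicator_of_notMem (fun h => ?_) _
        have := ((hSmem n a).1 h).2
        rw [hv] at this
        exact hn (by exact_mod_cast this.symm)
      have h2 : g n₀ a = f a := by
        rw [hg]
        simp only [Set.indicator_of_mem hmem]
        exact (hval n₀ a hmem).symm
      simpa [h2] using hasSum_single (f := fun n => g n a) n₀ h1
  have hfeq : f = fun a => ∑' n, g n a := by
    funext a
    exact ((hsum a).tsum_eq).symm
  have hfmeas : Measurable f := by
    apply measurable_of_tendsto_metrizable
      (f := fun N => fun a => ∑ n ∈ Finset.range N, g n a)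
      (fun N => Finset.measurable_sum _ (fun n _ => hgmeas n))
    rw [tendsto_pi_nhds]
    exact fun a => (hsum a).tendsto_sum_nat
  have hbound : ∀ a : ℤ_[p], ‖f a‖ ≤ 1 := by
    intro a
    by_cases ha : a = 0
    · simp [ha, hf0]
    · have hεz : |ε ^ a.valuation| = 1 := by
        rcases hε with h | h
        · simp [h]
        · rcases Nat.even_or_odd a.valuation with hv | hv
          · rw [h, hv.neg_one_pow]; simp
          · rw [h, hv.neg_one_pow]; simp
      rw [hf a ha, Real.norm_eq_abs, abs_mul, hεz, one_mul,
        abs_of_nonneg (Real.rpow_nonneg (norm_nonneg a) s)]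
      exact Real.rpow_le_one (norm_nonneg a) a.norm_le_one hs.le
  have hint : Integrable f μ :=
    (integrable_const (1 : ℝ)).mono' hfmeas.aestronglyMeasurable
      (ae_of_all μ hbound)
  refine ⟨hint, ?_⟩
  -- real volume of the shells
  have hSvolR : ∀ n, (μ (S n)).toReal = ((p : ℝ) ^ n)⁻¹ * (1 - (p : ℝ)⁻¹) := by
    intro n
    have hple : ((p : ℝ≥0∞) ^ (n + 1))⁻¹ ≤ ((p : ℝ≥0∞) ^ n)⁻¹ := by
      apply ENNReal.inv_le_inv.2
      exact pow_le_pow_right₀ (by exact_mod_cast (Fact.out : p.Prime).one_lt.le) (by omega)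
    have hfin : ((p : ℝ≥0∞) ^ n)⁻¹ ≠ ⊤ := by
      rw [ENNReal.inv_ne_top]
      exact pow_ne_zero n (by exact_mod_cast (Fact.out : p.Prime).ne_zero)
    rw [hSvol n, ENNReal.toReal_sub_of_le hple hfin]
    simp only [ENNReal.toReal_inv, ENNReal.toReal_pow, ENNReal.toReal_natCast]
    rw [pow_succ]
    field_simp
  -- integral of each shell piece
  have hgint : ∀ n, ∫ a, g n a ∂μ = (μ (S n)).toReal * c n := by
    intro n
    rw [hg]
    rw [integral_indicator_const (c n) (hSmeas n), smul_eq_mul, measureReal_def]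
  -- |c n| ≤ 1
  have hc1 : ∀ n, ‖c n‖ ≤ 1 := by
    intro n
    rw [hc, Real.norm_eq_abs, abs_mul, abs_pow, hεabs, one_pow, one_mul,
      abs_of_nonneg (Real.rpow_nonneg (zpow_nonneg hp0.le _) s)]
    refine Real.rpow_le_one (zpow_nonneg hp0.le _) ?_ hs.le
    exact zpow_le_one_of_nonpos₀ hp1.le (by omega)
  -- summability of the lintegrals
  have hlint : ∀ n, ∫⁻ a, ‖g n a‖₊ ∂μ ≤ ((p : ℝ≥0∞) ^ n)⁻¹ := by
    intro n
    have hb : ∀ a, (‖g n a‖₊ : ℝ≥0∞) ≤ (S n).indicator (fun _ => (1 : ℝ≥0∞)) a := by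
      intro a
      by_cases hmem : a ∈ S n
      · simp only [hg, Set.indicator_of_mem hmem]
        refine ENNReal.coe_le_one_iff.2 ?_
        exact_mod_cast hc1 n
      · simp [hg, Set.indicator_of_notMem hmem]
    calc ∫⁻ a, ‖g n a‖₊ ∂μ ≤ ∫⁻ a, (S n).indicator (fun _ => (1 : ℝ≥0∞)) a ∂μ :=
          lintegral_mono hb
      _ = 1 * μ (S n) := lintegral_indicator_const (hSmeas n) 1
      _ = μ (S n) := one_mul _
      _ ≤ μ (padicBall p n) := measure_mono Set.diff_subset
      _ = ((p : ℝ≥0∞) ^ n)⁻¹ := padicBall_volume p μ hμ n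
  have hlsum : ∑' n, ∫⁻ a, ‖g n a‖₊ ∂μ ≠ ⊤ := by
    refine ne_top_of_le_ne_top ?_ (ENNReal.tsum_le_tsum hlint)
    have : ∑' n : ℕ, ((p : ℝ≥0∞) ^ n)⁻¹ = (1 - (p : ℝ≥0∞)⁻¹)⁻¹ := by
      simp_rw [ENNReal.inv_pow]
      exact ENNReal.tsum_geometric _
    rw [this, ENNReal.inv_ne_top]
    refine (tsub_pos_of_lt ?_).ne'
    rw [ENNReal.inv_lt_one]
    exact_mod_cast (Fact.out : p.Prime).one_lt
  have key : ∫ a, f a ∂μ = ∑' n, ∫ a, g n a ∂μ := by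
    rw [hfeq]
    exact integral_tsum (fun n => (hgmeas n).aestronglyMeasurable) hlsum
  -- the geometric ratio
  set r : ℝ := ε * (p : ℝ) ^ (-(s + 1)) with hrdef
  have hterm : ∀ n, (μ (S n)).toReal * c n = (1 - (p : ℝ)⁻¹) * r ^ n := by
    intro n
    have e1 : ((p : ℝ) ^ (-(n : ℤ))) = (p : ℝ) ^ (-(n : ℝ)) := by
      rw [show (-(n : ℝ)) = ((-(n : ℤ) : ℤ) : ℝ) by push_cast; ring, Real.rpow_intCast]
    have e2 : ((p : ℝ) ^ n)⁻¹ = (p : ℝ) ^ (-(n : ℝ)) := by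
      rw [← Real.rpow_natCast (p : ℝ) n, ← Real.rpow_neg hp0.le]
    have e3 : r ^ n = ε ^ n * (p : ℝ) ^ ((-(s + 1)) * n) := by
      rw [hrdef, mul_pow, ← Real.rpow_natCast ((p : ℝ) ^ (-(s + 1))) n,
        ← Real.rpow_mul hp0.le]
    have e4 : c n = ε ^ n * ((p : ℝ) ^ (-(n : ℤ))) ^ s := by simp only [hc]
    rw [hSvolR n, e4, e1, e2, e3, ← Real.rpow_mul hp0.le]
    rw [show (p : ℝ) ^ (-(n : ℝ)) * (1 - (p : ℝ)⁻¹) * (ε ^ n * (p : ℝ) ^ (-(n : ℝ) * s))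
        = (1 - (p : ℝ)⁻¹) * (ε ^ n * ((p : ℝ) ^ (-(n : ℝ)) * (p : ℝ) ^ (-(n : ℝ) * s)))
        from by ring, ← Real.rpow_add hp0]
    congr 2
    ring
  have hrnorm : ‖r‖ < 1 := by
    rw [hrdef, Real.norm_eq_abs, abs_mul, hεabs, one_mul,
      abs_of_pos (Real.rpow_pos_of_pos hp0 _)]
    exact Real.rpow_lt_one_of_one_lt_of_neg hp1 (by linarith)
  rw [key]
  simp_rw [hgint, hterm]
  rw [tsum_mul_left, tsum_geometric_of_norm_lt_one hrnorm, div_eq_mul_inv]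
end

section
/- Let p be an odd prime and let E₁₁ = [[1,0],[0,0]] ∈ M₂(𝔽_p). A symmetric matrix X ∈ M₂(𝔽_p) satisfies X ≠ 0 and det X = 0 if and only if there exists h ∈ GL₂(𝔽_p) with X = (det h)⁻¹ · (h · E₁₁ · hᵀ). -/
open Matrix

/-- **Lemma 5.4, (1)⇔(2), over the residue field.**  Let `p` be an odd prime and
`E₁₁ = [[1,0],[0,0]] ∈ M₂(𝔽_p)`.  A symmetric matrix `X ∈ M₂(𝔽_p)` satisfies
`X ≠ 0` and `det X = 0` if and only if there exists `h ∈ GL₂(𝔽_p)` with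
`X = (det h)⁻¹·(h·E₁₁·hᵀ)`. -/
theorem symmetric_rank_one_orbit (p : ℕ) [Fact p.Prime] (hp : p ≠ 2)
    (X : Matrix (Fin 2) (Fin 2) (ZMod p)) (hX : Xᵀ = X) :
    (X ≠ 0 ∧ X.det = 0) ↔
      ∃ h : Matrix (Fin 2) (Fin 2) (ZMod p), IsUnit h.det ∧
        X = (h.det)⁻¹ • (h * !![1, 0; 0, 0] * hᵀ) := by
  constructor
  · rintro ⟨hX0, hdet⟩
    have hba : X 1 0 = X 0 1 := by
      conv_lhs => rw [← hX]
      rfl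
    rw [Matrix.det_fin_two, hba] at hdet
    by_cases haz : X 0 0 = 0
    · have hbz : X 0 1 = 0 := by
        have h2 : X 0 1 * X 0 1 = 0 := by
          rw [haz] at hdet; linear_combination -hdet
        exact mul_self_eq_zero.mp h2
      have hcz : X 1 1 ≠ 0 := by
        intro hc
        apply hX0
        ext i j
        fin_cases i <;> fin_cases j <;>
          simp [haz, hbz, hba, hc]
      refine ⟨!![0, -1; X 1 1, 0], ?_, ?_⟩
      · rw [Matrix.det_fin_two_of]
        simpa using hcz.isUnit
      · have ht : (!![(0:ZMod p), -1; X 1 1, 0])ᵀ = !![0, X 1 1; -1, 0] := by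
          ext i j; fin_cases i <;> fin_cases j <;> rfl
        rw [ht, Matrix.det_fin_two_of]
        ext i j
        fin_cases i <;> fin_cases j <;>
          · simp [Matrix.mul_apply, Fin.sum_univ_two, haz, hbz, hba]
            try field_simp
    · refine ⟨!![X 0 0, 0; X 0 1, 1], ?_, ?_⟩
      · rw [Matrix.det_fin_two_of]
        simpa using Ne.isUnit haz
      · have ht : (!![X 0 0, 0; X 0 1, 1])ᵀ = !![X 0 0, X 0 1; 0, 1] := by
          ext i j; fin_cases i <;> fin_cases j <;> rfl
        rw [ht, Matrix.det_fin_two_of]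
        ext i j
        fin_cases i <;> fin_cases j <;>
          · simp [Matrix.mul_apply, Fin.sum_univ_two, hba]
            field_simp
            try linear_combination hdet
  · rintro ⟨h, hu, hXe⟩
    have hd0 : h.det ≠ 0 := by
      intro h0; rw [h0] at hu; simpa using hu
    constructor
    · intro hz
      rw [hz] at hXe
      have hM : h * !![(1:ZMod p), 0; 0, 0] * hᵀ = 0 := by
        have := hXe.symm
        rw [smul_eq_zero] at this
        rcases this with h1 | h1
        · exact absurd h1 (inv_ne_zero hd0)
        · exact h1
      have hE : (!![(1:ZMod p), 0; 0, 0]) = 0 := by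
        have h1 : h⁻¹ * (h * !![(1:ZMod p), 0; 0, 0] * hᵀ) * (hᵀ)⁻¹ = 0 := by
          rw [hM]; simp
        rw [← mul_assoc, ← mul_assoc, Matrix.nonsing_inv_mul h hu, one_mul,
          mul_assoc, Matrix.mul_nonsing_inv hᵀ (by simpa using hu), mul_one] at h1
        exact h1
      have := congrFun (congrFun hE 0) 0
      simpa using this
    · rw [hXe]
      rw [Matrix.det_smul, Matrix.det_mul, Matrix.det_mul, Matrix.det_fin_two_of]
      simp
end

section
/- Let p be an odd prime, X ∈ M₂(𝔽_p) a symmetric matrix with det X ≠ 0, and t ∈ 𝔽_p^×. Then there exists h ∈ GL₂(𝔽_p) with h · X · hᵀ = t · X and det h = t. -/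
open Matrix

/-- Every nonzero `t` in `𝔽_p` is represented by the form `a² + d·b²` when `d ≠ 0`. -/
lemma rep_aux (p : ℕ) [Fact p.Prime] (d t : ZMod p) (hd : d ≠ 0) (ht : t ≠ 0) :
    ∃ a b : ZMod p, a ^ 2 + d * b ^ 2 = t := by
  by_cases hsd : IsSquare d
  · obtain ⟨c, hc⟩ := hsd
    have hc0 : c ≠ 0 := by rintro rfl; simp at hc; exact hd hc
    obtain ⟨a, y, hay⟩ := ZMod.sq_add_sq p t
    refine ⟨a, y / c, ?_⟩
    subst hc
    field_simp
    linear_combination hay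
  · by_cases hst : IsSquare t
    · obtain ⟨s, hs⟩ := hst
      exact ⟨s, 0, by rw [hs]; ring⟩
    · have h1 : quadraticChar (ZMod p) d = -1 :=
        quadraticChar_neg_one_iff_not_isSquare.mpr hsd
      have h2 : quadraticChar (ZMod p) t = -1 :=
        quadraticChar_neg_one_iff_not_isSquare.mpr hst
      have h3 : IsSquare (t * d) := by
        rw [← quadraticChar_one_iff_isSquare (mul_ne_zero ht hd), _root_.map_mul, h1, h2]
        ring
      obtain ⟨s, hs⟩ := h3
      refine ⟨0, s / d, ?_⟩
      field_simp
      linear_combination hs.symm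

/-- **Lemma 5.4, ¬(1)⇒¬(3), over the residue field.**  Let `p` be an odd prime,
`X ∈ M₂(𝔽_p)` a symmetric matrix with `det X ≠ 0`, and `t ∈ 𝔽_p^×`.  Then there
exists `h ∈ GL₂(𝔽_p)` with `h·X·hᵀ = t·X` and `det h = t`. -/
theorem exists_similitude_with_factor (p : ℕ) [Fact p.Prime] (hp : p ≠ 2)
    (X : Matrix (Fin 2) (Fin 2) (ZMod p)) (hX : Xᵀ = X) (hdet : X.det ≠ 0)
    (t : ZMod p) (ht : t ≠ 0) :
    ∃ h : Matrix (Fin 2) (Fin 2) (ZMod p), h * X * hᵀ = t • X ∧ h.det = t := by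
  obtain ⟨a, b, hab⟩ := rep_aux p X.det t hdet ht
  have h10 : X 1 0 = X 0 1 := by
    conv_lhs => rw [← hX]
    rfl
  have hab' : a ^ 2 + (X 0 0 * X 1 1 - X 0 1 * X 0 1) * b ^ 2 = t := by
    rw [← hab, det_fin_two, h10]
  have hXe : X = !![X 0 0, X 0 1; X 0 1, X 1 1] := by
    ext i j
    fin_cases i <;> fin_cases j <;> simp [h10]
  refine ⟨!![a - b * X 0 1, b * X 0 0; -(b * X 1 1), a + b * X 0 1], ?_, ?_⟩
  · rw [hXe]
    ext i j
    fin_cases i <;> fin_cases j <;>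
        simp [mul_apply, Fin.sum_univ_two, Matrix.vecHead, Matrix.vecTail,
          Matrix.transpose_apply]
    · linear_combination X 0 0 * hab'
    · linear_combination X 0 1 * hab'
    · linear_combination X 0 1 * hab'
    · linear_combination X 1 1 * hab'
  · rw [det_fin_two_of]
    linear_combination hab'
end

section
/- Let F = ℚ(√d) with d > 1 a squarefree integer, and let σ denote the nontrivial field automorphism of F over ℚ (applied entrywise to matrices and vectors). Consider V := {A ∈ M₂(F) : Aᵀ = σ(A)}. Then a matrix A ∈ V satisfies A ≠ 0 and det A = 0 if and only if there exist a nonzero rational number c and a nonzero vector v ∈ F² such that A = c · v·σ(v)ᵀ, i.e. the (i,j)-entry of A equals c·v_i·σ(v_j) for all i, j. -/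
open Matrix

/-- **Parametrization of isotropic vectors in `V` (Lemma 4.1 of the paper).**
Let `F = ℚ(√d)` with `d > 1` squarefree — realized as a field `F` with a
`ℚ`-algebra structure, an element `r` with `r² = d` generating `F` over `ℚ`, and
the nontrivial automorphism `σ` fixing `ℚ` and sending `r ↦ −r` — and let
`V = {A ∈ M₂(F) : Aᵀ = σ(A)}` (with `σ` applied entrywise).  Then `A ∈ V`
satisfies `A ≠ 0` and `det A = 0` if and only if there exist a nonzero rational
`c` and a nonzero vector `v ∈ F²` with `A_{ij} = c·v_i·σ(v_j)` for all `i, j`. -/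
theorem isotropic_vectors_are_rank_one
    (d : ℤ) (hd1 : 1 < d) (hdsq : Squarefree d)
    (F : Type*) [Field F] [Algebra ℚ F] (r : F) (hr : r ^ 2 = (d : F))
    (hgen : ∀ x : F, ∃ q₁ q₂ : ℚ,
      x = algebraMap ℚ F q₁ + algebraMap ℚ F q₂ * r)
    (σ : F ≃+* F) (hσq : ∀ q : ℚ, σ (algebraMap ℚ F q) = algebraMap ℚ F q)
    (hσr : σ r = -r)
    (A : Matrix (Fin 2) (Fin 2) F) (hA : Aᵀ = A.map σ) :
    (A ≠ 0 ∧ A.det = 0) ↔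
      ∃ c : ℚ, c ≠ 0 ∧ ∃ v : Fin 2 → F, v ≠ 0 ∧
        ∀ i j, A i j = algebraMap ℚ F c * (v i * σ (v j)) := by
  haveI : CharZero F := charZero_of_injective_algebraMap (algebraMap ℚ F).injective
  have hrne : r ≠ 0 := by
    intro h
    have hd0 : (d : F) = 0 := by rw [← hr, h]; ring
    have : (d : ℤ) = 0 := by exact_mod_cast hd0
    omega
  -- σ is an involution
  have hσσ : ∀ x : F, σ (σ x) = x := by
    intro x
    obtain ⟨q₁, q₂, hx⟩ := hgen x
    simp [hx, map_add, _root_.map_mul, hσq, hσr]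
  -- σ-fixed elements are rational
  have hfix : ∀ x : F, σ x = x → ∃ q : ℚ, x = algebraMap ℚ F q := by
    intro x hx
    obtain ⟨q₁, q₂, hq⟩ := hgen x
    have hσx : σ x = algebraMap ℚ F q₁ - algebraMap ℚ F q₂ * r := by
      simp [hq, map_add, _root_.map_mul, hσq, hσr]; ring
    have h2 : algebraMap ℚ F q₂ * r + algebraMap ℚ F q₂ * r = 0 := by
      have := hx.symm.trans hσx
      rw [hq] at this
      linear_combination this
    have hq2 : algebraMap ℚ F q₂ * r = 0 := by
      have : (2 : F) * (algebraMap ℚ F q₂ * r) = 0 := by linear_combination h2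
      rcases mul_eq_zero.mp this with h | h
      · exact absurd h two_ne_zero
      · exact h
    rcases mul_eq_zero.mp hq2 with h | h
    · exact ⟨q₁, by rw [hq, h]; ring⟩
    · exact absurd h hrne
  have hsym : ∀ i j, A j i = σ (A i j) := by
    intro i j
    have := congrFun (congrFun hA i) j
    simpa using this
  constructor
  · rintro ⟨hA0, hdet⟩
    rw [Matrix.det_fin_two] at hdet
    obtain ⟨qa, ha⟩ := hfix (A 0 0) (hsym 0 0).symm
    by_cases h00 : A 0 0 = 0
    · -- then A 0 1 = 0, A 1 0 = 0, A 1 1 ≠ 0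
      have h01 : A 0 1 = 0 := by
        have : A 0 1 * σ (A 0 1) = 0 := by
          rw [← hsym 0 1]; linear_combination -hdet + A 1 1 * h00
        rcases mul_eq_zero.mp this with h | h
        · exact h
        · have := congrArg σ h
          rw [hσσ] at this
          simpa using this
      have h10 : A 1 0 = 0 := by rw [hsym 0 1, h01, map_zero]
      have h11 : A 1 1 ≠ 0 := by
        intro h11
        apply hA0
        ext i j
        fin_cases i <;> fin_cases j <;> simpa [h00, h01, h10, h11]
      obtain ⟨qe, he⟩ := hfix (A 1 1) (hsym 1 1).symm
      refine ⟨qe, ?_, ![0, 1], ?_, ?_⟩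
      · intro h; apply h11; rw [he, h, map_zero]
      · intro h
        have := congrFun h 1
        simpa using this
      · intro i j
        fin_cases i <;> fin_cases j <;>
          simp [Matrix.cons_val_zero, Matrix.cons_val_one, h00, h01, h10, ← he]
    · -- A 0 0 ≠ 0
      have hqa : qa ≠ 0 := by
        intro h; apply h00; rw [ha, h, map_zero]
      refine ⟨qa, hqa, ![1, σ (A 0 1) / A 0 0], ?_, ?_⟩
      · intro h
        have := congrFun h 0
        simpa using this
      · have hσa : σ (A 0 0) = A 0 0 := (hsym 0 0).symm
        have hσ1 : σ (1 : F) = 1 := map_one σ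
        set w : Fin 2 → F := ![1, σ (A 0 1) / A 0 0] with hw
        have hw0 : w 0 = 1 := rfl
        have hw1 : w 1 = σ (A 0 1) / A 0 0 := rfl
        have e00 : A 0 0 = algebraMap ℚ F qa * (w 0 * σ (w 0)) := by
          rw [hw0, hσ1, ← ha]; ring
        have e01 : A 0 1 = algebraMap ℚ F qa * (w 0 * σ (w 1)) := by
          rw [hw0, hw1, map_div₀, hσσ, hσa, ← ha]; field_simp
        have e10 : A 1 0 = algebraMap ℚ F qa * (w 1 * σ (w 0)) := by
          rw [hw0, hw1, hσ1, ← ha, hsym 0 1]; field_simp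
        have e11 : A 1 1 = algebraMap ℚ F qa * (w 1 * σ (w 1)) := by
          rw [hw1, map_div₀, hσσ, hσa, ← ha]
          field_simp
          linear_combination hdet + A 0 1 * (hsym 0 1)
        intro i j
        fin_cases i <;> fin_cases j
        · exact e00
        · exact e01
        · exact e10
        · exact e11
  · rintro ⟨c, hc, v, hv, hvA⟩
    have hcF : algebraMap ℚ F c ≠ 0 := by
      simpa using (map_ne_zero (algebraMap ℚ F)).mpr hc
    constructor
    · obtain ⟨i, hi⟩ := Function.ne_iff.mp hv
      intro h
      have hAii : A i i = 0 := by rw [h]; rfl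
      rw [hvA i i] at hAii
      have hσvi : σ (v i) ≠ 0 := by
        intro h'
        apply hi
        have := congrArg σ h'
        rw [hσσ] at this
        simpa using this
      rcases mul_eq_zero.mp hAii with h' | h'
      · exact hcF h'
      · rcases mul_eq_zero.mp h' with h'' | h''
        · exact hi h''
        · exact hσvi h''
    · rw [Matrix.det_fin_two, hvA 0 0, hvA 1 1, hvA 0 1, hvA 1 0]
      ring
end
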